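/- arXiv:2001.11860 — 4 statements merged into one kernel-verified Lean document; each statement's English description precedes it below -/
import Mathlib

section
/- Let B be an n×n real symmetric positive definite matrix, R an m×m real symmetric positive definite matrix, and H an m×n real matrix. Define the Kalman gain K = B Hᵀ (H B Hᵀ + R)⁻¹ and the 3D-Var cost function J(x) = ½ (x − x_b)ᵀ B⁻¹ (x − x_b) + ½ (y − H x)ᵀ R⁻¹ (y − H x) for fixed vectors x_b ∈ ℝⁿ and y ∈ ℝᵐ. Then x_a = x_b + K (y − H x_b) is the unique global minimizer of J, i.e., J(x_a) ≤ J(x) for all x ∈ ℝⁿ, with equality only when x = x_a. -/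
/-!
At `x_a` the gradient of `J` vanishes: with `S = H B Hᵀ + R` both `B⁻¹ K` and `Hᵀ R⁻¹ (1 - H K)`
equal `Hᵀ S⁻¹`, which is exactly the normal equation `B⁻¹ (x_a - x_b) = Hᵀ R⁻¹ (y - H x_a)`.
Since `J` is quadratic, completing the square then gives
`J x = J x_a + ½ (x - x_a)ᵀ (B⁻¹ + Hᵀ R⁻¹ H) (x - x_a)`, and the Hessian `B⁻¹ + Hᵀ R⁻¹ H` is
positive definite.
-/

open Matrix

section QuadraticForm

variable {ι κ α : Type*} [Fintype ι] [Fintype κ] [CommRing α]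

theorem Matrix.IsSymm.dotProduct_mulVec_comm {M : Matrix ι ι α} (hM : M.IsSymm) (v w : ι → α) :
    v ⬝ᵥ M *ᵥ w = w ⬝ᵥ M *ᵥ v := by
  rw [← dotProduct_transpose_mulVec, hM.eq]

theorem Matrix.IsSymm.dotProduct_mulVec_add_add {M : Matrix ι ι α} (hM : M.IsSymm)
    (u d : ι → α) :
    (u + d) ⬝ᵥ M *ᵥ (u + d) = u ⬝ᵥ M *ᵥ u + 2 * (d ⬝ᵥ M *ᵥ u) + d ⬝ᵥ M *ᵥ d := by
  rw [mulVec_add, add_dotProduct, dotProduct_add, dotProduct_add, hM.dotProduct_mulVec_comm u d]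
  ring

theorem dotProduct_transpose_mul_mul_mulVec (H : Matrix κ ι α) (Q : Matrix κ κ α)
    (d w : ι → α) : d ⬝ᵥ (Hᵀ * Q * H) *ᵥ w = (H *ᵥ d) ⬝ᵥ Q *ᵥ (H *ᵥ w) := by
  rw [← mulVec_mulVec, ← mulVec_mulVec, dotProduct_transpose_mulVec, dotProduct_comm]

theorem cost_eq_add_hessian_of_normal_eq {P : Matrix ι ι α} {Q : Matrix κ κ α}
    (hP : P.IsSymm) (hQ : Q.IsSymm) (H : Matrix κ ι α) {xa xb : ι → α} {y : κ → α}
    (hxa : P *ᵥ (xa - xb) = Hᵀ *ᵥ (Q *ᵥ (y - H *ᵥ xa))) (x : ι → α) :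
    (x - xb) ⬝ᵥ P *ᵥ (x - xb) + (y - H *ᵥ x) ⬝ᵥ Q *ᵥ (y - H *ᵥ x) =
      (xa - xb) ⬝ᵥ P *ᵥ (xa - xb) + (y - H *ᵥ xa) ⬝ᵥ Q *ᵥ (y - H *ᵥ xa) +
        (x - xa) ⬝ᵥ (P + Hᵀ * Q * H) *ᵥ (x - xa) := by
  have hx : x - xb = (xa - xb) + (x - xa) := by abel
  have hHx : y - H *ᵥ x = (y - H *ᵥ xa) + H *ᵥ (xa - x) := by rw [mulVec_sub]; abel
  have hcross : (x - xa) ⬝ᵥ P *ᵥ (xa - xb) + (H *ᵥ (xa - x)) ⬝ᵥ Q *ᵥ (y - H *ᵥ xa) = 0 := by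
    rw [hxa, dotProduct_transpose_mulVec, dotProduct_comm, ← add_dotProduct, ← mulVec_add,
      sub_add_sub_cancel, sub_self, mulVec_zero, zero_dotProduct]
  have hsq : (H *ᵥ (xa - x)) ⬝ᵥ Q *ᵥ (H *ᵥ (xa - x)) = (x - xa) ⬝ᵥ (Hᵀ * Q * H) *ᵥ (x - xa) := by
    rw [dotProduct_transpose_mul_mul_mulVec, ← neg_sub x xa, mulVec_neg, mulVec_neg,
      neg_dotProduct, dotProduct_neg, neg_neg]
  rw [hx, hHx, hP.dotProduct_mulVec_add_add, hQ.dotProduct_mulVec_add_add, add_mulVec,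
    dotProduct_add, ← hsq]
  linear_combination 2 * hcross

end QuadraticForm

section KalmanGain

variable {ι κ α : Type*} [Fintype ι] [Fintype κ] [DecidableEq ι] [DecidableEq κ] [CommRing α]

theorem inv_mul_kalmanGain {B : Matrix ι ι α} {R : Matrix κ κ α} {H : Matrix κ ι α}
    {K : Matrix ι κ α} (hB : IsUnit B.det) (hR : IsUnit R.det)
    (hS : IsUnit (H * B * Hᵀ + R).det) (hK : K = B * Hᵀ * (H * B * Hᵀ + R)⁻¹) :
    B⁻¹ * K = Hᵀ * R⁻¹ * (1 - H * K) := by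
  set S := H * B * Hᵀ + R
  have hinnov : 1 - H * K = R * S⁻¹ := by
    rw [hK, ← mul_nonsing_inv S hS, ← Matrix.mul_assoc, ← Matrix.mul_assoc, ← Matrix.sub_mul]
    congr 1
    simp only [S, add_sub_cancel_left]
  rw [hinnov, hK, Matrix.mul_assoc B, nonsing_inv_mul_cancel_left _ _ hB, Matrix.mul_assoc Hᵀ,
    nonsing_inv_mul_cancel_left _ _ hR]

theorem kalman_analysis_normal_eq {B : Matrix ι ι α} {R : Matrix κ κ α} {H : Matrix κ ι α}
    {K : Matrix ι κ α} (hB : IsUnit B.det) (hR : IsUnit R.det)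
    (hS : IsUnit (H * B * Hᵀ + R).det) (hK : K = B * Hᵀ * (H * B * Hᵀ + R)⁻¹)
    (xb : ι → α) (y : κ → α) :
    B⁻¹ *ᵥ (K *ᵥ (y - H *ᵥ xb)) = Hᵀ *ᵥ (R⁻¹ *ᵥ (y - H *ᵥ (xb + K *ᵥ (y - H *ᵥ xb)))) := by
  have hres : y - H *ᵥ (xb + K *ᵥ (y - H *ᵥ xb)) = (1 - H * K) *ᵥ (y - H *ᵥ xb) := by
    rw [mulVec_add, sub_mulVec, one_mulVec, mulVec_mulVec]; abel
  rw [hres, mulVec_mulVec, inv_mul_kalmanGain hB hR hS hK, mulVec_mulVec, mulVec_mulVec,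
    Matrix.mul_assoc]

end KalmanGain

theorem Matrix.PosDef.unique_minimizer_of_eq_add {ι : Type*} [Fintype ι] {A : Matrix ι ι ℝ}
    (hA : A.PosDef) {c : ℝ} (hc : 0 < c) {f : (ι → ℝ) → ℝ} {a : ι → ℝ}
    (hf : ∀ x, f x = f a + c * ((x - a) ⬝ᵥ A *ᵥ (x - a))) (x : ι → ℝ) :
    f a ≤ f x ∧ (f x = f a → x = a) := by
  refine ⟨?_, fun hEq => ?_⟩
  · have hq := hA.posSemidef.dotProduct_mulVec_nonneg (x - a)
    simp only [star_trivial] at hq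
    rw [hf x]
    linarith [mul_nonneg hc.le hq]
  · by_contra hne
    have hq := hA.dotProduct_mulVec_pos (sub_ne_zero.mpr hne)
    simp only [star_trivial] at hq
    rw [hf x] at hEq
    linarith [mul_pos hc hq]

/-- The analysis `x_a = x_b + K (y - H x_b)` with Kalman gain
`K = B Hᵀ (H B Hᵀ + R)⁻¹` is the unique global minimizer of the 3D-Var cost
function `J`. -/
theorem kalman_analysis_unique_minimizer {n m : ℕ}
    (B : Matrix (Fin n) (Fin n) ℝ) (R : Matrix (Fin m) (Fin m) ℝ)
    (H : Matrix (Fin m) (Fin n) ℝ)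
    (hB : B.PosDef) (hR : R.PosDef)
    (xb : Fin n → ℝ) (y : Fin m → ℝ)
    (K : Matrix (Fin n) (Fin m) ℝ)
    (hK : K = B * Hᵀ * (H * B * Hᵀ + R)⁻¹)
    (J : (Fin n → ℝ) → ℝ)
    (hJ : ∀ x, J x = (1 / 2 : ℝ) * ((x - xb) ⬝ᵥ B⁻¹ *ᵥ (x - xb))
        + (1 / 2 : ℝ) * ((y - H *ᵥ x) ⬝ᵥ R⁻¹ *ᵥ (y - H *ᵥ x)))
    (xa : Fin n → ℝ) (hxa : xa = xb + K *ᵥ (y - H *ᵥ xb)) :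
    ∀ x : Fin n → ℝ, J xa ≤ J x ∧ (J x = J xa → x = xa) := by
  have hS : (H * B * Hᵀ + R).PosDef := by
    have := PosDef.posSemidef_add (hB.posSemidef.mul_mul_conjTranspose_same H) hR
    rwa [conjTranspose_eq_transpose_of_trivial] at this
  have hnormal : B⁻¹ *ᵥ (xa - xb) = Hᵀ *ᵥ (R⁻¹ *ᵥ (y - H *ᵥ xa)) := by
    rw [hxa, add_sub_cancel_left]
    exact kalman_analysis_normal_eq hB.det_pos.ne'.isUnit hR.det_pos.ne'.isUnit
      hS.det_pos.ne'.isUnit hK xb y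
  have hHess : (B⁻¹ + Hᵀ * R⁻¹ * H).PosDef := by
    simpa using hB.inv.add_posSemidef (hR.inv.posSemidef.conjTranspose_mul_mul_same H)
  refine hHess.unique_minimizer_of_eq_add one_half_pos fun x => ?_
  have hcost := cost_eq_add_hessian_of_normal_eq (by simpa using hB.inv.isHermitian)
    (by simpa using hR.inv.isHermitian) H hnormal x
  rw [hJ, hJ]
  linear_combination (1 / 2 : ℝ) * hcost
end

section
/- Let B be an n×n real symmetric positive definite matrix, R an m×m real symmetric positive definite matrix, H an m×n real matrix, and K = B Hᵀ (H B Hᵀ + R)⁻¹ the Kalman gain. Let (Ω, 𝔽, ℙ) be a probability space and ε_b : Ω → ℝⁿ, ε_y : Ω → ℝᵐ random vectors such that all products among their components are integrable, each component has mean zero, ∫ (ε_b)_i (ε_b)_j dℙ = B_{ij}, ∫ (ε_y)_k (ε_y)_l dℙ = R_{kl}, and ∫ (ε_b)_i (ε_y)_k dℙ = 0. With x_b = x_t + ε_b, y = H x_t − ε_y, and analysis x_a = x_b + K(y − H x_b), the expected background part of the cost satisfies ∫ (x_a − x_b)ᵀ B⁻¹ (x_a − x_b) dℙ = Tr(K H),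 i.e., E[2 J_b(x_a)] = Tr(K H). -/
/-!
Stack the two errors into `w = (ε_b, ε_y)`. The analysis increment
`x_a - x_b = -K (ε_y + H ε_b)` is then `L w` with `L = [-K H | -K]`, and `E[w wᵀ] = diag(B, R)`,
so the expected quadratic form is `tr(B⁻¹ L diag(B, R) Lᵀ) = tr(B⁻¹ K S Kᵀ)` with
`S = H B Hᵀ + R`. Since `K S = B Hᵀ`, this is `tr(Hᵀ Kᵀ) = tr(K H)`.
-/

open Matrix MeasureTheory

namespace MeasureTheory

variable {Ω ι ι' κ κ' : Type*} [MeasurableSpace Ω] {μ : Measure Ω}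

noncomputable def crossMoment (μ : Measure Ω) (u : Ω → ι → ℝ) (v : Ω → κ → ℝ) : Matrix ι κ ℝ :=
  Matrix.of fun i k => ∫ ω, u ω i * v ω k ∂μ

lemma crossMoment_swap (u : Ω → ι → ℝ) (v : Ω → κ → ℝ) :
    crossMoment μ v u = (crossMoment μ u v)ᵀ := by
  ext k i
  simp only [crossMoment, transpose_apply, of_apply, mul_comm]

lemma crossMoment_sumElim_sumElim (a : Ω → ι → ℝ) (b : Ω → ι' → ℝ) (c : Ω → κ → ℝ)
    (d : Ω → κ' → ℝ) :
    crossMoment μ (fun ω => Sum.elim (a ω) (b ω)) (fun ω => Sum.elim (c ω) (d ω)) =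
      fromBlocks (crossMoment μ a c) (crossMoment μ a d) (crossMoment μ b c)
        (crossMoment μ b d) := by
  ext (i | i) (k | k) <;> rfl

lemma integrable_sumElim_mul_sumElim {a : Ω → ι → ℝ} {b : Ω → ι' → ℝ} {c : Ω → κ → ℝ}
    {d : Ω → κ' → ℝ} (hac : ∀ i k, Integrable (fun ω => a ω i * c ω k) μ)
    (had : ∀ i k, Integrable (fun ω => a ω i * d ω k) μ)
    (hbc : ∀ i k, Integrable (fun ω => b ω i * c ω k) μ)
    (hbd : ∀ i k, Integrable (fun ω => b ω i * d ω k) μ) :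
    ∀ i k, Integrable (fun ω => Sum.elim (a ω) (b ω) i * Sum.elim (c ω) (d ω) k) μ := by
  rintro (i | i) (k | k)
  exacts [hac i k, had i k, hbc i k, hbd i k]

lemma integral_dotProduct_mulVec [Fintype ι] [Fintype κ] {u : Ω → ι → ℝ} {v : Ω → κ → ℝ}
    (M : Matrix ι κ ℝ) (huv : ∀ i k, Integrable (fun ω => u ω i * v ω k) μ) :
    ∫ ω, u ω ⬝ᵥ M *ᵥ v ω ∂μ = trace (M * crossMoment μ v u) := by
  have hexpand : ∀ ω, u ω ⬝ᵥ M *ᵥ v ω = ∑ i, ∑ k, M i k * (u ω i * v ω k) := fun ω => by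
    simp only [dotProduct, mulVec, Finset.mul_sum]
    exact Finset.sum_congr rfl fun i _ => Finset.sum_congr rfl fun k _ => by ring
  simp_rw [hexpand]
  rw [integral_finsetSum _ fun i _ =>
    integrable_finsetSum _ fun k _ => (huv i k).const_mul (M i k)]
  refine Finset.sum_congr rfl fun i _ => ?_
  rw [integral_finsetSum _ fun k _ => (huv i k).const_mul (M i k), diag_apply, mul_apply]
  refine Finset.sum_congr rfl fun k _ => ?_
  simp only [integral_const_mul, crossMoment, of_apply, mul_comm (v _ k)]

lemma integral_mulVec_dotProduct_mulVec [Fintype ι] [Fintype κ] {w : Ω → κ → ℝ}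
    (M : Matrix ι ι ℝ) (L : Matrix ι κ ℝ)
    (hw : ∀ k l, Integrable (fun ω => w ω k * w ω l) μ) :
    ∫ ω, (L *ᵥ w ω) ⬝ᵥ M *ᵥ (L *ᵥ w ω) ∂μ = trace (M * (L * crossMoment μ w w * Lᵀ)) := by
  have hpullback : ∀ ω, (L *ᵥ w ω) ⬝ᵥ M *ᵥ (L *ᵥ w ω) = w ω ⬝ᵥ (Lᵀ * M * L) *ᵥ w ω :=
    fun ω => by rw [← mulVec_mulVec, ← mulVec_mulVec, dotProduct_mulVec (w ω), vecMul_transpose]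
  simp_rw [hpullback]
  rw [integral_dotProduct_mulVec _ hw, trace_mul_comm M, Matrix.mul_assoc, trace_mul_comm]
  simp only [Matrix.mul_assoc]

end MeasureTheory

lemma Matrix.trace_inv_mul_kalmanGain {α : Type*} [CommRing α] {n m : Type*} [Fintype n]
    [DecidableEq n] [Fintype m] [DecidableEq m] {B : Matrix n n α} {S : Matrix m m α}
    (hB : IsUnit B.det) (hS : IsUnit S.det) (H : Matrix m n α) :
    trace (B⁻¹ * (B * Hᵀ * S⁻¹ * S * (B * Hᵀ * S⁻¹)ᵀ)) = trace (B * Hᵀ * S⁻¹ * H) := by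
  rw [nonsing_inv_mul_cancel_right _ _ hS, Matrix.mul_assoc B, nonsing_inv_mul_cancel_left _ _ hB,
    ← transpose_mul, trace_transpose]

theorem expected_background_cost_eq_trace_KH_general {n m : ℕ} {Ω : Type*}
    [MeasurableSpace Ω] (ℙ : Measure Ω)
    (B : Matrix (Fin n) (Fin n) ℝ) (R : Matrix (Fin m) (Fin m) ℝ)
    (H : Matrix (Fin m) (Fin n) ℝ)
    (hB : B.PosDef) (hR : R.PosDef)
    (K : Matrix (Fin n) (Fin m) ℝ)
    (hK : K = B * Hᵀ * (H * B * Hᵀ + R)⁻¹)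
    (xt : Fin n → ℝ)
    (εb : Ω → (Fin n → ℝ)) (εy : Ω → (Fin m → ℝ))
    (hbb : ∀ i j, Integrable (fun ω => εb ω i * εb ω j) ℙ)
    (hyy : ∀ k l, Integrable (fun ω => εy ω k * εy ω l) ℙ)
    (hby : ∀ i k, Integrable (fun ω => εb ω i * εy ω k) ℙ)
    (hBcov : ∀ i j, ∫ ω, εb ω i * εb ω j ∂ℙ = B i j)
    (hRcov : ∀ k l, ∫ ω, εy ω k * εy ω l ∂ℙ = R k l)
    (hcross : ∀ i k, ∫ ω, εb ω i * εy ω k ∂ℙ = 0)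
    (xb : Ω → (Fin n → ℝ)) (hxb : ∀ ω, xb ω = xt + εb ω)
    (y : Ω → (Fin m → ℝ)) (hy : ∀ ω, y ω = H *ᵥ xt - εy ω)
    (xa : Ω → (Fin n → ℝ))
    (hxa : ∀ ω, xa ω = xb ω + K *ᵥ (y ω - H *ᵥ xb ω)) :
    ∫ ω, (xa ω - xb ω) ⬝ᵥ B⁻¹ *ᵥ (xa ω - xb ω) ∂ℙ = (K * H).trace := by
  have hS : (H * B * Hᵀ + R).PosDef := by
    simpa only [conjTranspose_eq_transpose_of_trivial] using
      PosDef.posSemidef_add (hB.posSemidef.mul_mul_conjTranspose_same H) hR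
  have hincrement : ∀ ω, xa ω - xb ω = fromCols (-(K * H)) (-K) *ᵥ Sum.elim (εb ω) (εy ω) := by
    intro ω
    rw [hxa, hxb, hy, fromCols_mulVec_sumElim]
    simp only [mulVec_add, mulVec_sub, neg_mulVec, mulVec_mulVec]
    abel
  have hcov : crossMoment ℙ (fun ω => Sum.elim (εb ω) (εy ω)) (fun ω => Sum.elim (εb ω) (εy ω))
      = fromBlocks B 0 0 R := by
    have hby0 : crossMoment ℙ εb εy = 0 := by ext i k; exact hcross i k
    rw [crossMoment_sumElim_sumElim, crossMoment_swap εb εy, hby0, transpose_zero]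
    congr <;> ext <;> simp only [crossMoment, of_apply, hBcov, hRcov]
  have hyb : ∀ k i, Integrable (fun ω => εy ω k * εb ω i) ℙ := fun k i => by
    simpa only [mul_comm] using hby i k
  have hblocks : fromCols (-(K * H)) (-K) * fromBlocks B 0 0 R * (fromCols (-(K * H)) (-K))ᵀ
      = K * (H * B * Hᵀ + R) * Kᵀ := by
    simp only [transpose_fromCols, fromCols_mul_fromBlocks, fromCols_mul_fromRows,
      Matrix.mul_zero, add_zero, zero_add, transpose_neg, transpose_mul, Matrix.neg_mul,
      Matrix.mul_neg, neg_neg, Matrix.mul_add, Matrix.add_mul, Matrix.mul_assoc]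
  simp_rw [hincrement]
  rw [integral_mulVec_dotProduct_mulVec _ _
      (integrable_sumElim_mul_sumElim hbb hby hyb hyy), hcov, hblocks, hK]
  exact trace_inv_mul_kalmanGain hB.det_pos.ne'.isUnit hS.det_pos.ne'.isUnit H

/-- Desroziers–Ivanov background diagnosis: with optimal Kalman gain `K`,
`E[(x_a - x_b)ᵀ B⁻¹ (x_a - x_b)] = Tr(K H)`, i.e. `E[2 J_b(x_a)] = Tr(K H)`. -/
theorem expected_background_cost_eq_trace_KH {n m : ℕ} {Ω : Type*}
    [MeasurableSpace Ω] (ℙ : Measure Ω) [IsProbabilityMeasure ℙ]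
    (B : Matrix (Fin n) (Fin n) ℝ) (R : Matrix (Fin m) (Fin m) ℝ)
    (H : Matrix (Fin m) (Fin n) ℝ)
    (hB : B.PosDef) (hR : R.PosDef)
    (K : Matrix (Fin n) (Fin m) ℝ)
    (hK : K = B * Hᵀ * (H * B * Hᵀ + R)⁻¹)
    (xt : Fin n → ℝ)
    (εb : Ω → (Fin n → ℝ)) (εy : Ω → (Fin m → ℝ))
    (hbb : ∀ i j, Integrable (fun ω => εb ω i * εb ω j) ℙ)
    (hyy : ∀ k l, Integrable (fun ω => εy ω k * εy ω l) ℙ)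
    (hby : ∀ i k, Integrable (fun ω => εb ω i * εy ω k) ℙ)
    (hmb : ∀ i, ∫ ω, εb ω i ∂ℙ = 0)
    (hmy : ∀ k, ∫ ω, εy ω k ∂ℙ = 0)
    (hBcov : ∀ i j, ∫ ω, εb ω i * εb ω j ∂ℙ = B i j)
    (hRcov : ∀ k l, ∫ ω, εy ω k * εy ω l ∂ℙ = R k l)
    (hcross : ∀ i k, ∫ ω, εb ω i * εy ω k ∂ℙ = 0)
    (xb : Ω → (Fin n → ℝ)) (hxb : ∀ ω, xb ω = xt + εb ω)
    (y : Ω → (Fin m → ℝ)) (hy : ∀ ω, y ω = H *ᵥ xt - εy ω)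
    (xa : Ω → (Fin n → ℝ))
    (hxa : ∀ ω, xa ω = xb ω + K *ᵥ (y ω - H *ᵥ xb ω)) :
    ∫ ω, (xa ω - xb ω) ⬝ᵥ B⁻¹ *ᵥ (xa ω - xb ω) ∂ℙ = (K * H).trace :=
  expected_background_cost_eq_trace_KH_general ℙ B R H hB hR K hK xt εb εy hbb hyy hby hBcov hRcov
    hcross xb hxb y hy xa hxa
end

section
/- Let B be an n×n real symmetric positive definite matrix, R an m×m real symmetric positive definite matrix, H an m×n real matrix, and K = B Hᵀ (H B Hᵀ + R)⁻¹ the Kalman gain. Under the same second-moment hypotheses on the prior errors ε_b and ε_y (centered, mutually uncorrelated, entrywise covariances B and R, all component products integrable), with x_b = x_t + ε_b, y = H x_t − ε_y, and x_a = x_b + K(y − H x_b), the expected total 3D-Var cost at the analysis equals half the number of observations: ∫ J(x_a) dℙ = m/2, where J(x) = ½ (x − x_b)ᵀ B⁻¹ (x − x_b) + ½ (y − H x)ᵀ R⁻¹ (y − H x). -/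
/-!
Write `S = H B Hᵀ + R` and `d = y - H xb` for the innovation. The analysis residuals are
`xa - xb = K d` and `y - H xa = (1 - H K) d = R S⁻¹ d`, so for the optimal gain the two terms of
the cost add up to `½ dᵀ S⁻¹ d`. The innovation is a linear image of the joint error `(ε_b, ε_y)`,
whose second-moment matrix is block diagonal with blocks `B` and `R`; hence `E[d dᵀ] = S` and
`E[dᵀ S⁻¹ d] = tr (S⁻¹ S) = m`.
-/

open Matrix MeasureTheory

namespace Matrix

variable {α : Type*} [CommRing α] {p q : Type*} [Fintype p] [Fintype q]

lemma mulVec_dotProduct_mulVec_mulVec (A : Matrix p q α) (M : Matrix p p α) (v : q → α) :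
    (A *ᵥ v) ⬝ᵥ M *ᵥ (A *ᵥ v) = v ⬝ᵥ (Aᵀ * M * A) *ᵥ v := by
  rw [← mulVec_mulVec, ← mulVec_mulVec, dotProduct_mulVec v, vecMul_transpose]

omit [Fintype p] in
lemma mulVec_mul_mulVec (A : Matrix p q α) (v : q → α) (k l : p) :
    (A *ᵥ v) k * (A *ᵥ v) l = ∑ i, ∑ j, A k i * A l j * (v i * v j) := by
  simp only [mulVec, dotProduct, Finset.sum_mul_sum]
  exact Finset.sum_congr rfl fun i _ => Finset.sum_congr rfl fun j _ => by ring

lemma dotProduct_mulVec_self (M : Matrix p p α) (v : p → α) :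
    v ⬝ᵥ M *ᵥ v = ∑ i, ∑ j, M i j * (v i * v j) := by
  simp only [dotProduct, mulVec, Finset.mul_sum]
  exact Finset.sum_congr rfl fun i _ => Finset.sum_congr rfl fun j _ => by ring

end Matrix

section KalmanGain

variable {α : Type*} [CommRing α] {p q : Type*} [Fintype p] [Fintype q] [DecidableEq q]

lemma cost_eq_dotProduct_innovation (H : Matrix q p α) (K : Matrix p q α) (P : Matrix p p α)
    (Q : Matrix q q α) (xb xa : p → α) (y : q → α) (hxa : xa = xb + K *ᵥ (y - H *ᵥ xb)) :
    (xa - xb) ⬝ᵥ P *ᵥ (xa - xb) + (y - H *ᵥ xa) ⬝ᵥ Q *ᵥ (y - H *ᵥ xa)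
      = (y - H *ᵥ xb) ⬝ᵥ (Kᵀ * P * K + (1 - H * K)ᵀ * Q * (1 - H * K)) *ᵥ (y - H *ᵥ xb) := by
  have hres : y - H *ᵥ xa = (1 - H * K) *ᵥ (y - H *ᵥ xb) := by
    rw [hxa, mulVec_add, sub_mulVec, one_mulVec, ← mulVec_mulVec]
    abel
  rw [hres, hxa, add_sub_cancel_left, mulVec_dotProduct_mulVec_mulVec,
    mulVec_dotProduct_mulVec_mulVec, ← dotProduct_add, ← add_mulVec]

variable [DecidableEq p]

lemma kalmanGain_cost_matrix_eq_inv {B : Matrix p p α} {R : Matrix q q α} (H : Matrix q p α)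
    (hB : B.IsSymm) (hR : R.IsSymm) (hBdet : IsUnit B.det) (hRdet : IsUnit R.det)
    (hSdet : IsUnit (H * B * Hᵀ + R).det) {K : Matrix p q α}
    (hK : K = B * Hᵀ * (H * B * Hᵀ + R)⁻¹) :
    Kᵀ * B⁻¹ * K + (1 - H * K)ᵀ * R⁻¹ * (1 - H * K) = (H * B * Hᵀ + R)⁻¹ := by
  set S := H * B * Hᵀ + R with hS
  have hSsymm : Sᵀ = S := by
    rw [hS, transpose_add, transpose_mul, transpose_mul, transpose_transpose, hB.eq, hR.eq,
      Matrix.mul_assoc]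
  have hKt : Kᵀ = S⁻¹ * (H * B) := by
    rw [hK, transpose_mul, transpose_mul, transpose_transpose, hB.eq, transpose_nonsing_inv,
      hSsymm]
  have hresid : 1 - H * K = R * S⁻¹ := by
    rw [hK, ← Matrix.mul_assoc, ← Matrix.mul_assoc, ← mul_nonsing_inv S hSdet, ← Matrix.sub_mul,
      hS, add_sub_cancel_left]
  have hresidt : (1 - H * K)ᵀ = S⁻¹ * R := by
    rw [hresid, transpose_mul, hR.eq, transpose_nonsing_inv, hSsymm]
  calc Kᵀ * B⁻¹ * K + (1 - H * K)ᵀ * R⁻¹ * (1 - H * K)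
      = S⁻¹ * (H * B * Hᵀ + R) * S⁻¹ := by
        rw [hKt, hresidt, hresid, hK]
        simp only [Matrix.mul_assoc, Matrix.mul_add, Matrix.add_mul,
          nonsing_inv_mul_cancel_left _ _ hBdet, nonsing_inv_mul_cancel_left _ _ hRdet]
    _ = S⁻¹ := by rw [← hS, nonsing_inv_mul _ hSdet, Matrix.one_mul]

end KalmanGain

section SecondMoment

variable {Ω ι κ p q : Type*} [MeasurableSpace Ω] {μ : Measure Ω} [Fintype ι]

noncomputable def secondMoment (μ : Measure Ω) (z : Ω → ι → ℝ) : Matrix ι ι ℝ :=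
  of fun i j => ∫ ω, z ω i * z ω j ∂μ

variable {z : Ω → ι → ℝ}

lemma integrable_sum_sum_mul (c : ι → ι → ℝ)
    (hz : ∀ i j, Integrable (fun ω => z ω i * z ω j) μ) :
    Integrable (fun ω => ∑ i, ∑ j, c i j * (z ω i * z ω j)) μ :=
  integrable_finsetSum _ fun i _ => integrable_finsetSum _ fun j _ => (hz i j).const_mul _

lemma integral_sum_sum_mul (c : ι → ι → ℝ)
    (hz : ∀ i j, Integrable (fun ω => z ω i * z ω j) μ) :
    ∫ ω, ∑ i, ∑ j, c i j * (z ω i * z ω j) ∂μ = ∑ i, ∑ j, c i j * secondMoment μ z i j := by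
  rw [integral_finsetSum _ fun i _ =>
    integrable_finsetSum _ fun j _ => (hz i j).const_mul _]
  refine Finset.sum_congr rfl fun i _ => ?_
  rw [integral_finsetSum _ fun j _ => (hz i j).const_mul _]
  exact Finset.sum_congr rfl fun j _ => integral_const_mul _ _

lemma integral_dotProduct_mulVec_self (M : Matrix ι ι ℝ)
    (hz : ∀ i j, Integrable (fun ω => z ω i * z ω j) μ) :
    ∫ ω, z ω ⬝ᵥ M *ᵥ z ω ∂μ = trace (M * secondMoment μ z) := by
  simp only [dotProduct_mulVec_self]
  refine (integral_sum_sum_mul M hz).trans ?_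
  simp only [trace, diag, mul_apply]
  refine Finset.sum_congr rfl fun i _ => Finset.sum_congr rfl fun j _ => ?_
  simp only [secondMoment, of_apply, mul_comm (z _ i)]

lemma integrable_mulVec_mul_mulVec [Fintype κ] (A : Matrix κ ι ℝ)
    (hz : ∀ i j, Integrable (fun ω => z ω i * z ω j) μ) (k l : κ) :
    Integrable (fun ω => (A *ᵥ z ω) k * (A *ᵥ z ω) l) μ := by
  simp only [mulVec_mul_mulVec]
  exact integrable_sum_sum_mul _ hz

lemma secondMoment_mulVec [Fintype κ] (A : Matrix κ ι ℝ)
    (hz : ∀ i j, Integrable (fun ω => z ω i * z ω j) μ) :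
    secondMoment μ (fun ω => A *ᵥ z ω) = A * secondMoment μ z * Aᵀ := by
  ext k l
  simp only [secondMoment, of_apply, mulVec_mul_mulVec, integral_sum_sum_mul _ hz, mul_apply,
    transpose_apply, Finset.sum_mul]
  rw [Finset.sum_comm]
  exact Finset.sum_congr rfl fun i _ => Finset.sum_congr rfl fun j _ => by ring

variable {u : Ω → p → ℝ} {v : Ω → q → ℝ}

lemma integrable_sumElim_mul (hu : ∀ i j, Integrable (fun ω => u ω i * u ω j) μ)
    (hv : ∀ k l, Integrable (fun ω => v ω k * v ω l) μ)
    (huv : ∀ i k, Integrable (fun ω => u ω i * v ω k) μ) (a b : p ⊕ q) :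
    Integrable (fun ω => Sum.elim (u ω) (v ω) a * Sum.elim (u ω) (v ω) b) μ := by
  rcases a with i | k <;> rcases b with j | l
  · exact hu i j
  · exact huv i l
  · simpa only [Sum.elim_inr, Sum.elim_inl, mul_comm] using huv j k
  · exact hv k l

lemma secondMoment_sumElim_of_uncorrelated (huv : ∀ i k, ∫ ω, u ω i * v ω k ∂μ = 0) :
    secondMoment μ (fun ω => Sum.elim (u ω) (v ω))
      = fromBlocks (secondMoment μ u) 0 0 (secondMoment μ v) := by
  ext (i | k) (j | l)
  · rfl
  · exact huv i l
  · simpa only [secondMoment, of_apply, Sum.elim_inr, Sum.elim_inl, mul_comm, fromBlocks_apply₂₁,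
      Matrix.zero_apply] using huv j k
  · rfl

end SecondMoment

theorem expected_total_cost_eq_half_obs_dim_general {n m : ℕ} {Ω : Type*}
    [MeasurableSpace Ω] (ℙ : Measure Ω)
    (B : Matrix (Fin n) (Fin n) ℝ) (R : Matrix (Fin m) (Fin m) ℝ)
    (H : Matrix (Fin m) (Fin n) ℝ)
    (hB : B.PosDef) (hR : R.PosDef)
    (K : Matrix (Fin n) (Fin m) ℝ)
    (hK : K = B * Hᵀ * (H * B * Hᵀ + R)⁻¹)
    (xt : Fin n → ℝ)
    (εb : Ω → (Fin n → ℝ)) (εy : Ω → (Fin m → ℝ))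
    (hbb : ∀ i j, Integrable (fun ω => εb ω i * εb ω j) ℙ)
    (hyy : ∀ k l, Integrable (fun ω => εy ω k * εy ω l) ℙ)
    (hby : ∀ i k, Integrable (fun ω => εb ω i * εy ω k) ℙ)
    (hBcov : ∀ i j, ∫ ω, εb ω i * εb ω j ∂ℙ = B i j)
    (hRcov : ∀ k l, ∫ ω, εy ω k * εy ω l ∂ℙ = R k l)
    (hcross : ∀ i k, ∫ ω, εb ω i * εy ω k ∂ℙ = 0)
    (xb : Ω → (Fin n → ℝ)) (hxb : ∀ ω, xb ω = xt + εb ω)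
    (y : Ω → (Fin m → ℝ)) (hy : ∀ ω, y ω = H *ᵥ xt - εy ω)
    (xa : Ω → (Fin n → ℝ))
    (hxa : ∀ ω, xa ω = xb ω + K *ᵥ (y ω - H *ᵥ xb ω)) :
    ∫ ω, ((1 / 2 : ℝ) * ((xa ω - xb ω) ⬝ᵥ B⁻¹ *ᵥ (xa ω - xb ω))
        + (1 / 2 : ℝ) * ((y ω - H *ᵥ xa ω) ⬝ᵥ R⁻¹ *ᵥ (y ω - H *ᵥ xa ω))) ∂ℙ
      = (m : ℝ) / 2 := by
  set S := H * B * Hᵀ + R with hS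
  have hSdet : IsUnit S.det := by
    have hHBH := hB.posSemidef.mul_mul_conjTranspose_same H
    rw [conjTranspose_eq_transpose_of_trivial] at hHBH
    exact (isUnit_iff_isUnit_det S).mp (PosDef.posSemidef_add hHBH hR).isUnit
  have hM := kalmanGain_cost_matrix_eq_inv H (isHermitian_iff_isSymm.mp hB.isHermitian)
    (isHermitian_iff_isSymm.mp hR.isHermitian) ((isUnit_iff_isUnit_det B).mp hB.isUnit)
    ((isUnit_iff_isUnit_det R).mp hR.isUnit) hSdet hK
  set z : Ω → Fin n ⊕ Fin m → ℝ := fun ω => Sum.elim (εb ω) (εy ω)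
  have hz := integrable_sumElim_mul hbb hyy hby
  have hzMoment : secondMoment ℙ z = fromBlocks B 0 0 R := by
    rw [secondMoment_sumElim_of_uncorrelated hcross]
    congr <;> ext <;> simp only [secondMoment, of_apply, hBcov, hRcov]
  -- the innovation `y - H xb = -(H εb + εy)` is a linear image of the joint error `z`
  set G : Matrix (Fin m) (Fin n ⊕ Fin m) ℝ := fromCols (-H) (-1)
  have hinnov : ∀ ω, y ω - H *ᵥ xb ω = G *ᵥ z ω := by
    intro ω
    rw [fromCols_mulVec_sumElim, hy, hxb, mulVec_add, neg_mulVec, neg_mulVec, one_mulVec]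
    abel
  have hcost : ∀ ω, (1 / 2 : ℝ) * ((xa ω - xb ω) ⬝ᵥ B⁻¹ *ᵥ (xa ω - xb ω))
        + (1 / 2 : ℝ) * ((y ω - H *ᵥ xa ω) ⬝ᵥ R⁻¹ *ᵥ (y ω - H *ᵥ xa ω))
      = (1 / 2 : ℝ) * ((G *ᵥ z ω) ⬝ᵥ S⁻¹ *ᵥ (G *ᵥ z ω)) := by
    intro ω
    rw [← mul_add, cost_eq_dotProduct_innovation H K _ _ _ _ _ (hxa ω), hM, hinnov]
  have hinnovMoment : G * fromBlocks B 0 0 R * Gᵀ = S := by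
    rw [fromCols_mul_fromBlocks, transpose_fromCols, fromCols_mul_fromRows]
    simp [hS]
  simp only [hcost]
  rw [integral_const_mul, integral_dotProduct_mulVec_self _ (integrable_mulVec_mul_mulVec _ hz),
    secondMoment_mulVec _ hz, hzMoment, hinnovMoment, nonsing_inv_mul _ hSdet, trace_one,
    Fintype.card_fin]
  ring

/-- With optimal Kalman gain and exact error covariances, the expected total
3D-Var cost at the analysis equals half the number of observations:
`E[J(x_a)] = m / 2`. -/
theorem expected_total_cost_eq_half_obs_dim {n m : ℕ} {Ω : Type*}
    [MeasurableSpace Ω] (ℙ : Measure Ω) [IsProbabilityMeasure ℙ]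
    (B : Matrix (Fin n) (Fin n) ℝ) (R : Matrix (Fin m) (Fin m) ℝ)
    (H : Matrix (Fin m) (Fin n) ℝ)
    (hB : B.PosDef) (hR : R.PosDef)
    (K : Matrix (Fin n) (Fin m) ℝ)
    (hK : K = B * Hᵀ * (H * B * Hᵀ + R)⁻¹)
    (xt : Fin n → ℝ)
    (εb : Ω → (Fin n → ℝ)) (εy : Ω → (Fin m → ℝ))
    (hbb : ∀ i j, Integrable (fun ω => εb ω i * εb ω j) ℙ)
    (hyy : ∀ k l, Integrable (fun ω => εy ω k * εy ω l) ℙ)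
    (hby : ∀ i k, Integrable (fun ω => εb ω i * εy ω k) ℙ)
    (hmb : ∀ i, ∫ ω, εb ω i ∂ℙ = 0)
    (hmy : ∀ k, ∫ ω, εy ω k ∂ℙ = 0)
    (hBcov : ∀ i j, ∫ ω, εb ω i * εb ω j ∂ℙ = B i j)
    (hRcov : ∀ k l, ∫ ω, εy ω k * εy ω l ∂ℙ = R k l)
    (hcross : ∀ i k, ∫ ω, εb ω i * εy ω k ∂ℙ = 0)
    (xb : Ω → (Fin n → ℝ)) (hxb : ∀ ω, xb ω = xt + εb ω)
    (y : Ω → (Fin m → ℝ)) (hy : ∀ ω, y ω = H *ᵥ xt - εy ω)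
    (xa : Ω → (Fin n → ℝ))
    (hxa : ∀ ω, xa ω = xb ω + K *ᵥ (y ω - H *ᵥ xb ω)) :
    ∫ ω, ((1 / 2 : ℝ) * ((xa ω - xb ω) ⬝ᵥ B⁻¹ *ᵥ (xa ω - xb ω))
        + (1 / 2 : ℝ) * ((y ω - H *ᵥ xa ω) ⬝ᵥ R⁻¹ *ᵥ (y ω - H *ᵥ xa ω))) ∂ℙ
      = (m : ℝ) / 2 :=
  expected_total_cost_eq_half_obs_dim_general ℙ B R H hB hR K hK xt εb εy hbb hyy hby hBcov hRcov
    hcross xb hxb y hy xa hxa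
end

section
/- Let B be an n×n real symmetric positive semidefinite matrix, R an m×m real symmetric positive definite matrix, H an m×n real matrix, and K = B Hᵀ (H B Hᵀ + R)⁻¹ the Kalman gain. Then both matrices B Hᵀ (H B Hᵀ + R)⁻¹ H B and (I_n − K H) B = B − B Hᵀ (H B Hᵀ + R)⁻¹ H B are symmetric positive semidefinite. In particular, the analysis error covariance (I_n − K H) B is dominated by the background covariance B in the Loewner order. -/
/-!
The update term is `(H B)ᴴ S⁻¹ (H B)` with `S = H B Hᴴ + R` positive definite, hence positive
semidefinite. For the analysis covariance, the Kalman gain is characterised by `K S = B Hᴴ`, which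
gives Joseph's form `(1 - K H) B = (1 - K H) B (1 - K H)ᴴ + K R Kᴴ`: a sum of two congruences of
positive semidefinite matrices.
-/

open Matrix

open scoped ComplexOrder

namespace Matrix

variable {n m : Type*} [Fintype n] [Fintype m]

theorem one_sub_mul_mul_eq_joseph {α : Type*} [Ring α] [StarRing α] [DecidableEq n]
    {B : Matrix n n α} {H : Matrix m n α} {R : Matrix m m α} {K : Matrix n m α}
    (hK : K * (H * B * Hᴴ + R) = B * Hᴴ) :
    (1 - K * H) * B = (1 - K * H) * B * (1 - K * H)ᴴ + K * R * Kᴴ := by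
  have hKS : K * (H * B * Hᴴ) * Kᴴ + K * R * Kᴴ = B * Hᴴ * Kᴴ := by
    rw [← Matrix.add_mul, ← Matrix.mul_add, hK]
  symm
  calc (1 - K * H) * B * (1 - K * H)ᴴ + K * R * Kᴴ
      = (1 - K * H) * B - B * Hᴴ * Kᴴ + (K * (H * B * Hᴴ) * Kᴴ + K * R * Kᴴ) := by
        simp only [conjTranspose_sub, conjTranspose_one, conjTranspose_mul, Matrix.mul_sub,
          Matrix.sub_mul, Matrix.mul_one, Matrix.one_mul, Matrix.mul_assoc]
        abel
    _ = (1 - K * H) * B := by rw [hKS, sub_add_cancel]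

variable {𝕜 : Type*} [RCLike 𝕜] {B : Matrix n n 𝕜} {R : Matrix m m 𝕜}

theorem PosSemidef.mul_mul_conjTranspose_add_posDef (hB : B.PosSemidef) (hR : R.PosDef)
    (H : Matrix m n 𝕜) : (H * B * Hᴴ + R).PosDef :=
  PosDef.posSemidef_add (hB.mul_mul_conjTranspose_same H) hR

theorem IsHermitian.posSemidef_mul_conjTranspose_mul_inv_mul_mul [DecidableEq m]
    (hB : B.IsHermitian) {S : Matrix m m 𝕜} (hS : S.PosSemidef) (H : Matrix m n 𝕜) :
    (B * Hᴴ * S⁻¹ * H * B).PosSemidef := by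
  simpa only [conjTranspose_mul, hB.eq, Matrix.mul_assoc] using
    hS.inv.conjTranspose_mul_mul_same (H * B)

noncomputable def kalmanGain [DecidableEq m] (B : Matrix n n 𝕜) (H : Matrix m n 𝕜)
    (R : Matrix m m 𝕜) : Matrix n m 𝕜 :=
  B * Hᴴ * (H * B * Hᴴ + R)⁻¹

theorem kalmanGain_mul_innovationCov [DecidableEq m] (hB : B.PosSemidef) (hR : R.PosDef)
    (H : Matrix m n 𝕜) : kalmanGain B H R * (H * B * Hᴴ + R) = B * Hᴴ :=
  nonsing_inv_mul_cancel_right _ _ <|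
    (isUnit_iff_isUnit_det _).mp (hB.mul_mul_conjTranspose_add_posDef hR H).isUnit

theorem posSemidef_one_sub_kalmanGain_mul_mul [DecidableEq n] [DecidableEq m]
    (hB : B.PosSemidef) (hR : R.PosDef) (H : Matrix m n 𝕜) :
    ((1 - kalmanGain B H R * H) * B).PosSemidef := by
  rw [one_sub_mul_mul_eq_joseph (kalmanGain_mul_innovationCov hB hR H)]
  exact (hB.mul_mul_conjTranspose_same _).add (hR.posSemidef.mul_mul_conjTranspose_same _)

end Matrix

/-- Both the update term `B Hᵀ (H B Hᵀ + R)⁻¹ H B` and the analysis error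
covariance `(I - K H) B = B - B Hᵀ (H B Hᵀ + R)⁻¹ H B` are symmetric positive
semidefinite; in particular the analysis covariance is dominated by `B` in the
Loewner order. -/
theorem analysis_covariance_posSemidef {n m : ℕ}
    (B : Matrix (Fin n) (Fin n) ℝ) (R : Matrix (Fin m) (Fin m) ℝ)
    (H : Matrix (Fin m) (Fin n) ℝ)
    (hB : B.PosSemidef) (hR : R.PosDef)
    (K : Matrix (Fin n) (Fin m) ℝ)
    (hK : K = B * Hᵀ * (H * B * Hᵀ + R)⁻¹) :
    (B * Hᵀ * (H * B * Hᵀ + R)⁻¹ * H * B).PosSemidef ∧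
    ((1 : Matrix (Fin n) (Fin n) ℝ) - K * H) * B
        = B - B * Hᵀ * (H * B * Hᵀ + R)⁻¹ * H * B ∧
    (((1 : Matrix (Fin n) (Fin n) ℝ) - K * H) * B).PosSemidef := by
  simp only [← conjTranspose_eq_transpose_of_trivial] at hK ⊢
  subst hK
  exact ⟨hB.isHermitian.posSemidef_mul_conjTranspose_mul_inv_mul_mul
      (hB.mul_mul_conjTranspose_add_posDef hR H).posSemidef H,
    by rw [sub_mul, one_mul],
    posSemidef_one_sub_kalmanGain_mul_mul hB hR H⟩
end
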